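/- arXiv:2508.12607 — 2 statements merged into one kernel-verified Lean document; each statement's English description precedes it below -/
import Mathlib

section
/- Let G be a finite simple graph having a connected component that is not a complete graph. Then there exists an internal vertex v of G such that η(G ∖ v) ≤ η(G) and η(G_v) < η(G). -/
/-- A maximal clique of a simple graph: a clique that is maximal under inclusion. -/
def MaxClq {V : Type*} (G : SimpleGraph V) (s : Set V) : Prop :=
  G.IsClique s ∧ ∀ t : Set V, G.IsClique t → s ⊆ t → s = t

/-- An internal vertex: a vertex lying in at least two (distinct) maximal cliques. -/
def InternalVtx {V : Type*} (G : SimpleGraph V) (v : V) : Prop :=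
  ∃ s t : Set V, MaxClq G s ∧ MaxClq G t ∧ s ≠ t ∧ v ∈ s ∧ v ∈ t

/-- `iv G`: the number of internal vertices of `G`. -/
noncomputable def ivNum {V : Type*} (G : SimpleGraph V) : ℕ :=
  {v : V | InternalVtx G v}.ncard

/-- `c G`: the number of connected components of `G`. -/
noncomputable def compNum {V : Type*} (G : SimpleGraph V) : ℕ :=
  Nat.card G.ConnectedComponent

/-- `𝒞 G`: the number of maximal cliques of `G`. -/
noncomputable def maxClqNum {V : Type*} (G : SimpleGraph V) : ℕ :=
  {s : Set V | MaxClq G s}.ncard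

/-- `ω G`: the clique number of `G`, the maximum size of a clique. -/
noncomputable def clqNum {V : Type*} (G : SimpleGraph V) : ℕ :=
  sSup {k : ℕ | ∃ s : Set V, G.IsClique s ∧ s.ncard = k}

/-- A set of edges of `G` is clique-disjoint if no two distinct edges of it are both
contained in a single clique of `G`. -/
def CliqueDisjointEdges {V : Type*} (G : SimpleGraph V) (E : Set (Sym2 V)) : Prop :=
  E ⊆ G.edgeSet ∧ ∀ e ∈ E, ∀ f ∈ E, e ≠ f →
    ¬ ∃ s : Set V, G.IsClique s ∧ (∀ x ∈ e, x ∈ s) ∧ (∀ x ∈ f, x ∈ s)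

/-- `η G`: the maximum cardinality of a clique-disjoint set of edges of `G`. -/
noncomputable def etaNum {V : Type*} (G : SimpleGraph V) : ℕ :=
  sSup {k : ℕ | ∃ E : Set (Sym2 V), CliqueDisjointEdges G E ∧ E.ncard = k}

/-- `G_v`: the graph on the same vertex set as `G` whose edges are those of `G` together
with all edges between distinct neighbours of `v`. -/
def addNbrEdges {V : Type*} (G : SimpleGraph V) (v : V) : SimpleGraph V where
  Adj a b := G.Adj a b ∨ (a ≠ b ∧ G.Adj v a ∧ G.Adj v b)
  symm := by
    constructor
    intro a b h
    rcases h with h | ⟨hne, h1, h2⟩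
    · exact Or.inl h.symm
    · exact Or.inr ⟨hne.symm, h2, h1⟩
  loopless := by
    constructor
    intro a h
    rcases h with h | ⟨hne, _, _⟩
    · exact G.irrefl h
    · exact hne rfl

/-
The internal vertex is the middle vertex `v` of an induced path `a - v - b`, found on a shortest
path between two non-adjacent vertices of a common component. Deleting a vertex cannot increase
`η`, since clique-disjoint edge sets of an induced subgraph stay clique-disjoint in `G`. For
`G_v`, the closed neighbourhood of `v` is a clique of `G_v`, so a maximum clique-disjoint set of
`G_v` has at most one edge inside it; the remaining edges are edges of `G` lying in no clique of
`G` through `v`, and adding `va` and `vb` to them gives a larger clique-disjoint set of `G`.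
-/

open Set SimpleGraph

section

variable {V W : Type*}

section CliqueDisjoint

variable {G : SimpleGraph V}

lemma CliqueDisjointEdges.empty (G : SimpleGraph V) : CliqueDisjointEdges G ∅ :=
  ⟨empty_subset _, fun _ he => he.elim⟩

lemma CliqueDisjointEdges.insert {E : Set (Sym2 V)} (hE : CliqueDisjointEdges G E) {e : Sym2 V}
    (he : e ∈ G.edgeSet)
    (hsep : ∀ f ∈ E, f ≠ e →
      ¬ ∃ s : Set V, G.IsClique s ∧ (∀ x ∈ e, x ∈ s) ∧ (∀ x ∈ f, x ∈ s)) :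
    CliqueDisjointEdges G (insert e E) := by
  refine ⟨insert_subset he hE.1, ?_⟩
  rintro f (rfl | hf) g (rfl | hg) hfg ⟨s, hs, hfs, hgs⟩
  · exact hfg rfl
  · exact hsep g hg hfg.symm ⟨s, hs, hfs, hgs⟩
  · exact hsep f hf hfg ⟨s, hs, hgs, hfs⟩
  · exact hE.2 f hf g hg hfg ⟨s, hs, hfs, hgs⟩

lemma bddAbove_cliqueDisjointEdges_ncard [Finite V] (G : SimpleGraph V) :
    BddAbove {k : ℕ | ∃ E : Set (Sym2 V), CliqueDisjointEdges G E ∧ E.ncard = k} := by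
  refine ⟨Nat.card (Sym2 V), ?_⟩
  rintro k ⟨E, -, rfl⟩
  simpa [ncard_univ] using ncard_le_ncard (subset_univ E)

lemma CliqueDisjointEdges.ncard_le_etaNum [Finite V] {E : Set (Sym2 V)}
    (hE : CliqueDisjointEdges G E) : E.ncard ≤ etaNum G :=
  le_csSup (bddAbove_cliqueDisjointEdges_ncard G) ⟨E, hE, rfl⟩

lemma exists_cliqueDisjointEdges_ncard_eq_etaNum [Finite V] (G : SimpleGraph V) :
    ∃ E : Set (Sym2 V), CliqueDisjointEdges G E ∧ E.ncard = etaNum G :=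
  Nat.sSup_mem (s := {k | ∃ E : Set (Sym2 V), CliqueDisjointEdges G E ∧ E.ncard = k})
    ⟨0, ∅, .empty G, ncard_empty _⟩ (bddAbove_cliqueDisjointEdges_ncard G)

lemma CliqueDisjointEdges.map_embedding {H : SimpleGraph W} (f : H ↪g G) {E : Set (Sym2 W)}
    (hE : CliqueDisjointEdges H E) : CliqueDisjointEdges G (Sym2.map f '' E) := by
  constructor
  · rintro _ ⟨e, he, rfl⟩
    induction e using Sym2.ind with
    | _ a b => simpa using hE.1 he
  · rintro _ ⟨e, he, rfl⟩ _ ⟨e', he', rfl⟩ hne ⟨s, hs, hes, hes'⟩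
    refine hE.2 e he e' he' (fun h => hne (h ▸ rfl)) ⟨f ⁻¹' s, ?_, ?_, ?_⟩
    · intro x hx y hy hxy
      exact f.map_adj_iff.mp (hs hx hy (f.injective.ne hxy))
    · exact fun x hx => hes (f x) (Sym2.mem_map.mpr ⟨x, hx, rfl⟩)
    · exact fun x hx => hes' (f x) (Sym2.mem_map.mpr ⟨x, hx, rfl⟩)

lemma etaNum_le_of_embedding [Finite V] [Finite W] {H : SimpleGraph W} (f : H ↪g G) :
    etaNum H ≤ etaNum G := by
  obtain ⟨E, hE, hcard⟩ := exists_cliqueDisjointEdges_ncard_eq_etaNum H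
  rw [← hcard, ← ncard_image_of_injective E (Sym2.map.injective f.injective)]
  exact (hE.map_embedding f).ncard_le_etaNum

end CliqueDisjoint

lemma exists_maxClq_superset [Finite V] {G : SimpleGraph V} {c : Set V} (hc : G.IsClique c) :
    ∃ s, MaxClq G s ∧ c ⊆ s := by
  obtain ⟨s, ⟨hs, hcs⟩, hmax⟩ :=
    (toFinite {t : Set V | G.IsClique t ∧ c ⊆ t}).exists_maximalFor id _ ⟨c, hc, subset_rfl⟩
  exact ⟨s, ⟨hs, fun t ht hst => hst.antisymm (hmax ⟨ht, hcs.trans hst⟩ hst)⟩, hcs⟩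

lemma internalVtx_of_adj_of_adj [Finite V] {G : SimpleGraph V} {v a b : V} (hab : a ≠ b)
    (hnab : ¬ G.Adj a b) (hva : G.Adj v a) (hvb : G.Adj v b) : InternalVtx G v := by
  obtain ⟨s, hs, hvas⟩ := exists_maxClq_superset (G.isClique_pair.mpr fun _ => hva)
  obtain ⟨t, ht, hvbt⟩ := exists_maxClq_superset (G.isClique_pair.mpr fun _ => hvb)
  refine ⟨s, t, hs, ht, ?_, hvas (mem_insert v _), hvbt (mem_insert v _)⟩
  rintro rfl
  exact hnab (hs.1 (hvas (by simp)) (hvbt (by simp)) hab)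

-- The first and third vertices of a shortest `u`-`w` walk are distinct and non-adjacent.
lemma SimpleGraph.Reachable.exists_adj_adj_not_adj {G : SimpleGraph V} {u w : V}
    (hr : G.Reachable u w) (huw : u ≠ w) (hnuw : ¬ G.Adj u w) :
    ∃ v a b : V, a ≠ b ∧ ¬ G.Adj a b ∧ G.Adj v a ∧ G.Adj v b := by
  obtain ⟨p, hp⟩ := hr.exists_walk_length_eq_dist
  match p, hp with
  | .nil, _ => exact absurd rfl huw
  | .cons h .nil, _ => exact absurd h hnuw
  | .cons (v := x) h₁ (.cons (v := y) h₂ q), hp =>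
    simp only [Walk.length_cons] at hp
    refine ⟨x, u, y, ?_, fun h => ?_, h₁.symm, h₂⟩
    · rintro rfl
      have := dist_le q
      omega
    · have := dist_le (.cons h q)
      simp only [Walk.length_cons] at this
      omega

section AddNbrEdges

variable {G : SimpleGraph V} {v : V}

lemma isClique_addNbrEdges_insert_neighborSet :
    (addNbrEdges G v).IsClique (insert v (G.neighborSet v)) := by
  rintro x (rfl | hx) y (rfl | hy) hxy
  · exact absurd rfl hxy
  · exact Or.inl hy
  · exact Or.inl hx.symm
  · exact Or.inr ⟨hxy, hx, hy⟩

def outerEdges (G : SimpleGraph V) (v : V) (E : Set (Sym2 V)) : Set (Sym2 V) :=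
  E \ {e | ∀ x ∈ e, x ∈ insert v (G.neighborSet v)}

lemma outerEdges_subset_edgeSet {E : Set (Sym2 V)} (hE : E ⊆ (addNbrEdges G v).edgeSet) :
    outerEdges G v E ⊆ G.edgeSet := by
  rintro e ⟨he, hout⟩
  induction e using Sym2.ind with
  | _ a b =>
    rcases hE he with h | ⟨-, ha, hb⟩
    · exact h
    · refine absurd (fun x hx => ?_) hout
      rcases Sym2.mem_iff.mp hx with rfl | rfl
      exacts [Or.inr ha, Or.inr hb]

lemma notMem_of_mem_outerEdges {E : Set (Sym2 V)} {e : Sym2 V} (he : e ∈ outerEdges G v E)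
    {s : Set V} (hs : G.IsClique s) (hes : ∀ x ∈ e, x ∈ s) : v ∉ s := by
  intro hvs
  refine he.2 fun x hx => ?_
  by_cases hxv : x = v
  · exact Or.inl hxv
  · exact Or.inr (hs hvs (hes x hx) (Ne.symm hxv))

lemma cliqueDisjointEdges_outerEdges {E : Set (Sym2 V)}
    (hE : CliqueDisjointEdges (addNbrEdges G v) E) :
    CliqueDisjointEdges G (outerEdges G v E) :=
  ⟨outerEdges_subset_edgeSet hE.1, fun e he f hf hef ⟨s, hs, hes, hfs⟩ =>
    hE.2 e he.1 f hf.1 hef ⟨s, fun _ hx _ hy hxy => Or.inl (hs hx hy hxy), hes, hfs⟩⟩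

lemma cliqueDisjointEdges_insert_insert_outerEdges {a b : V} (hab : a ≠ b)
    (hnab : ¬ G.Adj a b) (hva : G.Adj v a) (hvb : G.Adj v b) {E : Set (Sym2 V)}
    (hE : CliqueDisjointEdges (addNbrEdges G v) E) :
    CliqueDisjointEdges G (insert s(v, a) (insert s(v, b) (outerEdges G v E))) := by
  have hsep : ∀ c, ∀ f ∈ outerEdges G v E, ¬ ∃ s : Set V, G.IsClique s ∧
      (∀ x ∈ s(v, c), x ∈ s) ∧ (∀ x ∈ f, x ∈ s) := fun c f hf ⟨s, hs, hcs, hfs⟩ =>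
    notMem_of_mem_outerEdges hf hs hfs (hcs v (Sym2.mem_mk_left v c))
  refine ((cliqueDisjointEdges_outerEdges hE).insert hvb (fun f hf _ => hsep b f hf)).insert hva ?_
  rintro f (rfl | hf) _
  · rintro ⟨s, hs, has, hbs⟩
    exact hnab (hs (has a (Sym2.mem_mk_right v a)) (hbs b (Sym2.mem_mk_right v b)) hab)
  · exact hsep a f hf

lemma etaNum_addNbrEdges_lt [Finite V] {a b : V} (hab : a ≠ b) (hnab : ¬ G.Adj a b)
    (hva : G.Adj v a) (hvb : G.Adj v b) : etaNum (addNbrEdges G v) < etaNum G := by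
  obtain ⟨E, hE, hcard⟩ := exists_cliqueDisjointEdges_ncard_eq_etaNum (addNbrEdges G v)
  set N := insert v (G.neighborSet v)
  set inner := {e | ∀ x ∈ e, x ∈ N} ∩ E
  have h_inner : inner.ncard ≤ 1 := (ncard_le_one).mpr fun e he f hf => by
    by_contra hef
    exact hE.2 e he.2 f hf.2 hef ⟨N, isClique_addNbrEdges_insert_neighborSet, he.1, hf.1⟩
  have h_split : E.ncard ≤ (outerEdges G v E).ncard + inner.ncard := by
    have := ncard_le_ncard_sdiff_add_ncard E inner
    rwa [sdiff_inter_self_eq_sdiff] at this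
  have hva_out : s(v, a) ∉ outerEdges G v E := fun h =>
    h.2 fun x hx => by rcases Sym2.mem_iff.mp hx with rfl | rfl <;> simp [hva]
  have hvb_out : s(v, b) ∉ outerEdges G v E := fun h =>
    h.2 fun x hx => by rcases Sym2.mem_iff.mp hx with rfl | rfl <;> simp [hvb]
  have hvab : s(v, a) ∉ insert s(v, b) (outerEdges G v E) := by
    rintro (h | h)
    · rcases Sym2.eq_iff.mp h with ⟨-, rfl⟩ | ⟨rfl, rfl⟩ <;> exact hab rfl
    · exact hva_out h
  have h_ext := (cliqueDisjointEdges_insert_insert_outerEdges hab hnab hva hvb hE).ncard_le_etaNum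
  rw [ncard_insert_of_notMem hvab, ncard_insert_of_notMem hvb_out] at h_ext
  omega

end AddNbrEdges

end

/-- if some connected component of `G` is not a complete graph, then there is
an internal vertex `v` with `η(G ∖ v) ≤ η(G)` and `η(G_v) < η(G)`. -/
theorem stmt6 {V : Type*} [Finite V] (G : SimpleGraph V)
    (h : ∃ u w : V, u ≠ w ∧ G.Reachable u w ∧ ¬ G.Adj u w) :
    ∃ v : V, InternalVtx G v ∧
      etaNum (G.induce {u : V | u ≠ v}) ≤ etaNum G ∧
      etaNum (addNbrEdges G v) < etaNum G := by
  obtain ⟨u, w, huw, hr, hnuw⟩ := h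
  obtain ⟨v, a, b, hab, hnab, hva, hvb⟩ := hr.exists_adj_adj_not_adj huw hnuw
  exact ⟨v, internalVtx_of_adj_of_adj hab hnab hva hvb,
    etaNum_le_of_embedding (Embedding.induce _), etaNum_addNbrEdges_lt hab hnab hva hvb⟩
end

section
/- Let G be a finite simple graph and v an internal vertex of G. Then c(G_v) = c(G), c(G_v ∖ v) = c(G), and c(G ∖ v) ≥ c(G), where c denotes the number of connected components. -/
/-!
Adding the edges between neighbours of `v` only joins vertices that were already joined
through `v`, so reachability is unchanged. Deleting a non-isolated vertex never merges
components, since `v` stays attached to the component of any of its neighbours. When the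
neighbourhood of `v` is a clique, as it is in `G_v`, deleting `v` does not split components
either: a walk through `v` can jump directly between the two neighbours it visits. An internal
vertex lies in two distinct cliques, so it is not isolated.
-/

open SimpleGraph

namespace SimpleGraph

variable {V : Type*} {G H : SimpleGraph V} {v : V}

lemma compNum_eq_of_reachable_iff (h : ∀ a b, H.Reachable a b ↔ G.Reachable a b) :
    compNum H = compNum G :=
  Nat.card_congr (Quot.congrRight h)

lemma ConnectedComponent.map_induce_ne_surjective (hv : ¬ G.IsIsolated v) :
    Function.Surjective
      (ConnectedComponent.map (Embedding.induce (G := G) {u | u ≠ v}).toHom) := by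
  obtain ⟨w, hvw⟩ := exists_adj_iff_not_isIsolated.2 hv
  refine ConnectedComponent.ind fun x => ?_
  by_cases hx : x = v
  · subst hx
    exact ⟨connectedComponentMk _ ⟨w, hvw.ne'⟩, ConnectedComponent.sound hvw.symm.reachable⟩
  · exact ⟨connectedComponentMk _ ⟨x, hx⟩, rfl⟩

/-- Strengthened for the induction: a walk starting at `v` may instead start at any neighbour
of `v`. -/
lemma reachable_induce_ne_of_walk (hN : G.IsClique (G.neighborSet v)) {a b : V}
    (p : G.Walk a b) (hb : b ≠ v) {u : V} (hu : u ≠ v) (hua : u = a ∨ (a = v ∧ G.Adj v u)) :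
    (G.induce {x | x ≠ v}).Reachable ⟨u, hu⟩ ⟨b, hb⟩ := by
  induction p generalizing u with
  | nil =>
    obtain rfl | ⟨rfl, -⟩ := hua
    exacts [Reachable.refl _, absurd rfl hb]
  | @cons a c b hac p ih =>
    have via_c (hc : c ≠ v) (huc : u = c ∨ G.Adj u c) :
        (G.induce {x | x ≠ v}).Reachable ⟨u, hu⟩ ⟨b, hb⟩ := by
      obtain rfl | huc := huc
      exacts [ih hb hc (.inl rfl),
        (show (G.induce {x | x ≠ v}).Adj ⟨u, hu⟩ ⟨c, hc⟩ from huc).reachable.trans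
          (ih hb hc (.inl rfl))]
    obtain rfl | ⟨rfl, hvu⟩ := hua
    · by_cases hc : c = v
      · subst hc
        exact ih hb hu (.inr ⟨rfl, hac.symm⟩)
      · exact via_c hc (.inr hac)
    · exact via_c hac.ne' ((eq_or_ne u c).imp_right (hN hvu hac))

lemma ConnectedComponent.map_induce_ne_injective (hN : G.IsClique (G.neighborSet v)) :
    Function.Injective
      (ConnectedComponent.map (Embedding.induce (G := G) {u | u ≠ v}).toHom) := by
  intro c d
  refine ConnectedComponent.ind₂ (fun x y hxy => ?_) c d
  simp only [ConnectedComponent.map_mk, ConnectedComponent.eq] at hxy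
  obtain ⟨p⟩ := hxy
  exact ConnectedComponent.sound (reachable_induce_ne_of_walk hN p y.2 x.2 (.inl rfl))

lemma compNum_le_compNum_induce_ne [Finite V] (hv : ¬ G.IsIsolated v) :
    compNum G ≤ compNum (G.induce {u | u ≠ v}) :=
  Nat.card_le_card_of_surjective _ (ConnectedComponent.map_induce_ne_surjective hv)

lemma compNum_induce_ne_of_isClique (hN : G.IsClique (G.neighborSet v))
    (hv : ¬ G.IsIsolated v) : compNum (G.induce {u | u ≠ v}) = compNum G :=
  Nat.card_congr (Equiv.ofBijective _ ⟨ConnectedComponent.map_induce_ne_injective hN,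
    ConnectedComponent.map_induce_ne_surjective hv⟩)

end SimpleGraph

section InternalVtx

variable {V : Type*} {G : SimpleGraph V} {v : V}

lemma InternalVtx.not_isIsolated (hv : InternalVtx G v) : ¬ G.IsIsolated v := by
  obtain ⟨s, t, hs, ht, hst, hvs, hvt⟩ := hv
  intro hiso
  have eq_singleton {c : Set V} (hc : G.IsClique c) (hvc : v ∈ c) : c = {v} :=
    Set.eq_singleton_iff_unique_mem.2
      ⟨hvc, fun x hx => by_contra fun hxv => hiso x (hc hvc hx (Ne.symm hxv))⟩
  exact hst ((eq_singleton hs.1 hvs).trans (eq_singleton ht.1 hvt).symm)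

end InternalVtx

section addNbrEdges

variable {V : Type*} (G : SimpleGraph V) (v : V)

lemma le_addNbrEdges : G ≤ addNbrEdges G v := fun _ _ => Or.inl

lemma neighborSet_addNbrEdges_self : (addNbrEdges G v).neighborSet v = G.neighborSet v :=
  Set.ext fun _ => ⟨fun h => h.elim id fun h => h.2.2, Or.inl⟩

lemma isClique_neighborSet_addNbrEdges :
    (addNbrEdges G v).IsClique ((addNbrEdges G v).neighborSet v) := by
  rw [neighborSet_addNbrEdges_self]
  exact fun _ hx _ hy hxy => Or.inr ⟨hxy, hx, hy⟩

lemma reachable_addNbrEdges_iff (a b : V) :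
    (addNbrEdges G v).Reachable a b ↔ G.Reachable a b := by
  refine ⟨fun h => ?_, fun h => h.mono (le_addNbrEdges G v)⟩
  rw [reachable_iff_reflTransGen] at h ⊢
  refine Relation.reflTransGen_closed (fun x y hxy => ?_) _ _ h
  rw [← reachable_iff_reflTransGen]
  rcases hxy with hxy | ⟨-, hx, hy⟩
  exacts [hxy.reachable, hx.symm.reachable.trans hy.reachable]

lemma compNum_addNbrEdges : compNum (addNbrEdges G v) = compNum G :=
  compNum_eq_of_reachable_iff (reachable_addNbrEdges_iff G v)

end addNbrEdges

/-- if `v` is an internal vertex of `G`, then `c(G_v) = c(G)`,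
`c(G_v ∖ v) = c(G)` and `c(G ∖ v) ≥ c(G)`. -/
theorem stmt13 {V : Type*} [Finite V] (G : SimpleGraph V) (v : V)
    (hv : InternalVtx G v) :
    compNum (addNbrEdges G v) = compNum G ∧
    compNum ((addNbrEdges G v).induce {u : V | u ≠ v}) = compNum G ∧
    compNum G ≤ compNum (G.induce {u : V | u ≠ v}) := by
  have hiso : ¬ G.IsIsolated v := hv.not_isIsolated
  have hiso' : ¬ (addNbrEdges G v).IsIsolated v := by
    rwa [← neighborSet_nonempty, neighborSet_addNbrEdges_self, neighborSet_nonempty]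
  refine ⟨compNum_addNbrEdges G v, ?_, compNum_le_compNum_induce_ne hiso⟩
  rw [compNum_induce_ne_of_isClique (isClique_neighborSet_addNbrEdges G v) hiso',
    compNum_addNbrEdges]
end
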